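/- For every integer d ≥ 4, A_d < O_{d-1}. -/

import Mathlib

/-- The Macaulay bound `a^⟨t⟩`: writing the (unique, greedy) binomial expansion
`a = C(k(t),t) + C(k(t-1),t-1) + ⋯ + C(k(j),j)` with `k(t) > ⋯ > k(j) ≥ j ≥ 1`,
`macaulay t a = C(k(t)+1,t+1) + C(k(t-1)+1,t) + ⋯ + C(k(j)+1,j+1)`.
(The value at `t = 0` is irrelevant for the definitions below.) -/
def macaulay : ℕ → ℕ → ℕ
  | 0, a => a
  | t+1, a =>
    if a = 0 then 0
    else
      Nat.choose (Nat.findGreatest (fun m => Nat.choose m (t+1) ≤ a) (a + t + 1) + 1) (t+2)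
        + macaulay t (a - Nat.choose
            (Nat.findGreatest (fun m => Nat.choose m (t+1) ≤ a) (a + t + 1)) (t+1))

/-- A finite O-sequence `(a_0, a_1, …, a_s)`, encoded as a nonempty list of
positive integers with `a_0 = 1` and `a_{t+1} ≤ a_t^⟨t⟩` for all `1 ≤ t ≤ s-1`. -/
def IsOSeq (l : List ℕ) : Prop :=
  l ≠ [] ∧ (∀ x ∈ l, 0 < x) ∧ l.getD 0 0 = 1 ∧
    ∀ t : ℕ, 1 ≤ t → t + 1 < l.length → l.getD (t+1) 0 ≤ macaulay t (l.getD t 0)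

/-- `numOSeq d` = the number `O_d` of finite O-sequences of multiplicity `d`. -/
noncomputable def numOSeq (d : ℕ) : ℕ := {l : List ℕ | IsOSeq l ∧ l.sum = d}.ncard

/-- `numASeq d` = the number `A_d` of finite O-sequences of multiplicity `d`
whose last entry is strictly greater than `1`. -/
noncomputable def numASeq (d : ℕ) : ℕ :=
  {l : List ℕ | IsOSeq l ∧ l.sum = d ∧ 1 < l.getLastD 0}.ncard

/-- `numOCond p n k d` = the number `O(p,n,k,d)` of finite O-sequences
`(a_0,…,a_s)` of multiplicity `d` with `s ≤ n`, `a_i = C(p-1+i, i)` for all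
`0 ≤ i ≤ k` (in particular `s ≥ k`), and `a_i < C(p-1+i, i)` for `k < i ≤ s`. -/
noncomputable def numOCond (p n k d : ℕ) : ℕ :=
  {l : List ℕ | IsOSeq l ∧ l.sum = d ∧ l.length - 1 ≤ n ∧ k ≤ l.length - 1 ∧
    (∀ i ≤ k, l.getD i 0 = Nat.choose (p - 1 + i) i) ∧
    (∀ i : ℕ, k < i → i < l.length → l.getD i 0 < Nat.choose (p - 1 + i) i)}.ncard

/-! ### Auxiliary lemmas -/

lemma macaulay_zero' (t : ℕ) : macaulay t 0 = 0 := by cases t <;> simp [macaulay]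

lemma macaulay_one' (t : ℕ) : macaulay t 1 = 1 := by
  cases t with
  | zero => rfl
  | succ t =>
    have hfg : Nat.findGreatest (fun m => Nat.choose m (t+1) ≤ 1) (1 + t + 1) = t + 1 := by
      rw [Nat.findGreatest_eq_iff]
      refine ⟨by omega, fun _ => by simp, fun n hn _ hP => ?_⟩
      have h1 : Nat.choose (t+2) (t+1) ≤ Nat.choose n (t+1) :=
        Nat.choose_le_choose _ (by omega)
      rw [Nat.choose_succ_self_right] at h1
      omega
    simp only [macaulay, if_neg one_ne_zero, hfg, Nat.choose_self, Nat.sub_self,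
      macaulay_zero']

lemma getD_concat_lt' (l : List ℕ) (x : ℕ) {i : ℕ} (h : i < l.length) :
    (l ++ [x]).getD i 0 = l.getD i 0 := by
  rw [List.getD_eq_getElem?_getD, List.getD_eq_getElem?_getD, List.getElem?_append, if_pos h]

lemma getD_concat_len' (l : List ℕ) (x : ℕ) : (l ++ [x]).getD l.length 0 = x := by
  rw [List.getD_eq_getElem?_getD, List.getElem?_concat_length]; rfl

lemma getD_replicate' (n i : ℕ) (h : i < n) : (List.replicate n (1:ℕ)).getD i 0 = 1 := by
  rw [List.getD_eq_getElem?_getD, List.getElem?_replicate, if_pos (by simpa using h)]; rfl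

lemma getLastD_eq_getLast' (l : List ℕ) (h : l ≠ []) : l.getLastD 0 = l.getLast h := by
  conv_lhs => rw [← List.dropLast_append_getLast h]
  rw [List.getLastD_concat]

lemma self_eq_dropLast_concat (l : List ℕ) (h : l ≠ []) :
    l = l.dropLast ++ [l.getLastD 0] := by
  rw [getLastD_eq_getLast' l h, List.dropLast_append_getLast h]

lemma getLastD_eq_getD' (l : List ℕ) (h : l ≠ []) :
    l.getLastD 0 = l.getD (l.length - 1) 0 := by
  have h2 := getD_concat_len' l.dropLast (l.getLastD 0)
  rw [← self_eq_dropLast_concat l h, List.length_dropLast] at h2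
  exact h2.symm

/-- The map decrementing the last entry of a list. -/
def decLast (l : List ℕ) : List ℕ := l.dropLast ++ [l.getLastD 0 - 1]

lemma decLast_getD_lt (l : List ℕ) (hne : l ≠ []) {i : ℕ} (h : i < l.length - 1) :
    (decLast l).getD i 0 = l.getD i 0 := by
  have hdl : l.dropLast.length = l.length - 1 := List.length_dropLast
  rw [decLast, getD_concat_lt' _ _ (by omega)]
  conv_rhs => rw [self_eq_dropLast_concat l hne]
  rw [getD_concat_lt' _ _ (by omega)]

lemma decLast_getD_last (l : List ℕ) :
    (decLast l).getD (l.length - 1) 0 = l.getLastD 0 - 1 := by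
  have h2 := getD_concat_len' l.dropLast (l.getLastD 0 - 1)
  rwa [List.length_dropLast] at h2

lemma decLast_length (l : List ℕ) (hne : l ≠ []) : (decLast l).length = l.length := by
  have := List.length_pos_iff.mpr hne
  rw [decLast]
  simp only [List.length_append, List.length_cons, List.length_nil, List.length_dropLast]
  omega

lemma decLast_sum (l : List ℕ) : (decLast l).sum = l.dropLast.sum + (l.getLastD 0 - 1) := by
  simp [decLast]

lemma decLast_dropLast (l : List ℕ) : (decLast l).dropLast = l.dropLast :=
  List.dropLast_concat

lemma decLast_getLastD (l : List ℕ) : (decLast l).getLastD 0 = l.getLastD 0 - 1 :=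
  List.getLastD_concat

lemma sum_eq_dropLast_sum_add (l : List ℕ) (hne : l ≠ []) :
    l.sum = l.dropLast.sum + l.getLastD 0 := by
  conv_lhs => rw [self_eq_dropLast_concat l hne]
  simp

/-- For every integer `d ≥ 4`, `A_d < O_{d-1}`. -/
theorem Ad_lt_Od_sub_one (d : ℕ) (hd : 4 ≤ d) : numASeq d < numOSeq (d - 1) := by
  obtain ⟨e, rfl⟩ := Nat.exists_eq_add_of_le hd
  set A : Set (List ℕ) := {l | IsOSeq l ∧ l.sum = 4 + e ∧ 1 < l.getLastD 0} with hA
  set O : Set (List ℕ) := {l | IsOSeq l ∧ l.sum = e + 3} with hO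
  -- basic facts about elements of A
  have hAfacts : ∀ l ∈ A, l ≠ [] ∧ 2 ≤ l.length := by
    intro l hl
    obtain ⟨⟨hne, hpos, hhead, hcond⟩, hsum, hlast⟩ := hl
    refine ⟨hne, ?_⟩
    by_contra hlen
    have h1 : l.length = 1 := by
      have := List.length_pos_iff.mpr hne; omega
    rw [getLastD_eq_getD' l hne, h1] at hlast
    simp only [show (1:ℕ)-1 = 0 from rfl, hhead] at hlast
    omega
  -- `decLast` maps `A` into `O`
  have hmaps : ∀ l ∈ A, decLast l ∈ O := by
    intro l hl
    obtain ⟨⟨hne, hpos, hhead, hcond⟩, hsum, hlast⟩ := hl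
    obtain ⟨-, hlen2⟩ := hAfacts l ⟨⟨hne, hpos, hhead, hcond⟩, hsum, hlast⟩
    refine ⟨⟨by simp [decLast], ?_, ?_, ?_⟩, ?_⟩
    · intro x hx
      rcases List.mem_append.mp hx with hx | hx
      · exact hpos x (List.dropLast_subset l hx)
      · rw [List.mem_singleton] at hx; omega
    · rw [decLast_getD_lt l hne (i := 0) (by omega)]; exact hhead
    · intro t ht htl
      rw [decLast_length l hne] at htl
      by_cases hc : t + 1 < l.length - 1
      · rw [decLast_getD_lt l hne hc, decLast_getD_lt l hne (i := t) (by omega)]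
        exact hcond t ht (by omega)
      · have hteq : t + 1 = l.length - 1 := by omega
        rw [hteq, decLast_getD_last, decLast_getD_lt l hne (i := t) (by omega)]
        calc l.getLastD 0 - 1 ≤ l.getLastD 0 := Nat.sub_le _ _
          _ = l.getD (t+1) 0 := by rw [getLastD_eq_getD' l hne, hteq]
          _ ≤ macaulay t (l.getD t 0) := hcond t ht (by omega)
    · have h1 := sum_eq_dropLast_sum_add l hne
      have h2 := decLast_sum l
      omega
  -- injectivity of `decLast` on `A`
  have hinj : Set.InjOn decLast A := by
    intro l1 h1 l2 h2 heq
    obtain ⟨hne1, -⟩ := hAfacts l1 h1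
    obtain ⟨hne2, -⟩ := hAfacts l2 h2
    have hdrop : l1.dropLast = l2.dropLast := by
      have h := congrArg List.dropLast heq
      simpa only [decLast_dropLast] using h
    have hlasts : l1.getLastD 0 - 1 = l2.getLastD 0 - 1 := by
      have h := congrArg (fun m : List ℕ => m.getLastD 0) heq
      simpa only [decLast_getLastD] using h
    have hg1 : 1 < l1.getLastD 0 := h1.2.2
    have hg2 : 1 < l2.getLastD 0 := h2.2.2
    have hlast : l1.getLastD 0 = l2.getLastD 0 := by omega
    rw [self_eq_dropLast_concat l1 hne1, self_eq_dropLast_concat l2 hne2, hdrop, hlast]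
  -- the witness: all-ones sequence of length e+3
  set w : List ℕ := List.replicate (e + 3) 1 with hw
  have hwO : w ∈ O := by
    refine ⟨⟨by simp [hw], ?_, ?_, ?_⟩, ?_⟩
    · intro x hx; rw [hw] at hx; rw [List.eq_of_mem_replicate hx]; omega
    · rw [hw]; exact getD_replicate' _ _ (by omega)
    · intro t ht htl
      rw [hw] at htl ⊢
      simp only [List.length_replicate] at htl
      rw [getD_replicate' _ _ htl, getD_replicate' _ _ (by omega), macaulay_one']
    · rw [hw]; simp [List.sum_replicate]
  have hwnot : w ∉ decLast '' A := by
    rintro ⟨l, hl, hfl⟩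
    obtain ⟨hne, hlen2⟩ := hAfacts l hl
    have hw' : w = List.replicate (e + 2) 1 ++ [1] := by
      rw [hw, ← List.replicate_succ']
    have hdrop : l.dropLast = List.replicate (e + 2) 1 := by
      have h := congrArg List.dropLast hfl
      rw [decLast_dropLast, hw', List.dropLast_concat] at h
      exact h
    have hlasteq : l.getLastD 0 - 1 = 1 := by
      have h := congrArg (fun m => List.getLastD m 0) hfl
      rw [decLast_getLastD, hw', List.getLastD_concat] at h
      exact h
    have hg : 1 < l.getLastD 0 := hl.2.2
    have hlast2 : l.getLastD 0 = 2 := by omega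
    have hleq : l = List.replicate (e + 2) 1 ++ [2] := by
      conv_lhs => rw [self_eq_dropLast_concat l hne]
      rw [hdrop, hlast2]
    obtain ⟨⟨-, -, -, hcond⟩, -, -⟩ := hl
    have hlenl : l.length = e + 3 := by rw [hleq]; simp
    have hkey := hcond (e + 1) (by omega) (by omega)
    rw [hleq] at hkey
    have h1 : (List.replicate (e+2) (1:ℕ) ++ [2]).getD (e+1+1) 0 = 2 := by
      have h := getD_concat_len' (List.replicate (e+2) (1:ℕ)) 2
      rwa [List.length_replicate] at h
    have h2 : (List.replicate (e+2) (1:ℕ) ++ [2]).getD (e+1) 0 = 1 := by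
      rw [getD_concat_lt' _ _ (i := e+1) (by simp), getD_replicate' _ _ (by omega)]
    rw [h1, h2, macaulay_one'] at hkey
    omega
  -- finiteness of `O`
  have hOfin : O.Finite := by
    rw [← Set.finite_coe_iff]
    have hφ : ∀ l : O, (l : List ℕ).sum = e + 3 ∧ ∀ x ∈ (l : List ℕ), 0 < x := by
      rintro ⟨l, ⟨⟨-, hpos, -, -⟩, hsum⟩⟩
      exact ⟨hsum, hpos⟩
    let φ : O → Composition (e + 3) := fun l =>
      ⟨(l : List ℕ), fun {i} hi => (hφ l).2 i hi, (hφ l).1⟩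
    have hφinj : Function.Injective φ := by
      intro a b hab
      have : (a : List ℕ) = (b : List ℕ) := congrArg Composition.blocks hab
      exact Subtype.ext this
    exact Finite.of_injective φ hφinj
  -- conclude
  have key : numASeq (4 + e) = A.ncard := rfl
  have key2 : numOSeq (4 + e - 1) = O.ncard := by
    have h34 : 4 + e - 1 = e + 3 := by omega
    rw [numOSeq, h34]
  rw [key, key2, ← Set.ncard_image_of_injOn hinj]
  refine Set.ncard_lt_ncard ?_ hOfin
  rw [Set.ssubset_iff_of_subset (by rintro x ⟨l, hl, rfl⟩; exact hmaps l hl)]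
  exact ⟨w, hwO, hwnot⟩
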